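/- arXiv:1412.5010 — 2 statements merged into one kernel-verified Lean document; each statement's English description precedes it below -/
import Mathlib

section
/- In every half-integral embedding of a Steiner tree whose terminals have integral positions, the length of every root-terminal path is an integer. -/
open SimpleGraph Classical

noncomputable section

/-- ℓ₁ norm on the plane. -/
def l1 (p : ℝ × ℝ) : ℝ := |p.1| + |p.2|

/-- ℓ₁ length of an embedded edge. -/
def edgeLen {V : Type*} (π : V → ℝ × ℝ) : Sym2 V → ℝ :=
  Sym2.lift ⟨fun v w => l1 (π v - π w), fun v w => by
    simp [l1, abs_sub_comm]⟩

/-- ℓ₁ length of an embedded walk. -/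
def walkLen {V : Type*} (G : SimpleGraph V) (π : V → ℝ × ℝ)
    {u v : V} (w : G.Walk u v) : ℝ :=
  (w.edges.map (edgeLen π)).sum

/-- Total ℓ₁ length of an embedded graph. -/
def cost {V : Type*} [Fintype V] (G : SimpleGraph V) [DecidableRel G.Adj]
    (π : V → ℝ × ℝ) : ℝ :=
  ∑ e ∈ G.edgeFinset, edgeLen π e



lemma habs_int (a : ℝ) (h : ∃ n : ℤ, 2 * a = n) : ∃ m : ℤ, |a| = a + m := by
  obtain ⟨n, hn⟩ := h
  rcases abs_choice a with h1 | h1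
  · exact ⟨0, by simp [h1]⟩
  · exact ⟨-n, by push_cast; rw [h1]; linarith⟩

lemma walk_key {V : Type*} (G : SimpleGraph V) (π : V → ℝ × ℝ)
    (hhalf : ∀ v : V, (∃ a : ℤ, 2 * (π v).1 = a) ∧ ∃ b : ℤ, 2 * (π v).2 = b)
    {u v : V} (w : G.Walk u v) :
    ∃ M : ℤ, walkLen G π w = (π u).1 - (π v).1 + ((π u).2 - (π v).2) + M := by
  induction w with
  | nil => exact ⟨0, by simp [walkLen]⟩
  | @cons a b c h p ih =>
    obtain ⟨M, hM⟩ := ih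
    have hx : ∃ m : ℤ, |(π a - π b).1| = (π a - π b).1 + m := by
      apply habs_int
      obtain ⟨na, hna⟩ := (hhalf a).1
      obtain ⟨nb, hnb⟩ := (hhalf b).1
      exact ⟨na - nb, by push_cast; simp; linarith⟩
    have hy : ∃ m : ℤ, |(π a - π b).2| = (π a - π b).2 + m := by
      apply habs_int
      obtain ⟨na, hna⟩ := (hhalf a).2
      obtain ⟨nb, hnb⟩ := (hhalf b).2
      exact ⟨na - nb, by push_cast; simp; linarith⟩
    obtain ⟨m1, h1⟩ := hx
    obtain ⟨m2, h2⟩ := hy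
    refine ⟨m1 + m2 + M, ?_⟩
    have : walkLen G π (SimpleGraph.Walk.cons h p)
        = edgeLen π s(a, b) + walkLen G π p := by
      simp [walkLen]
    rw [this, hM]
    have he : edgeLen π s(a, b) = |(π a - π b).1| + |(π a - π b).2| := by
      simp [edgeLen, l1]
    rw [he, h1, h2]
    simp only [Prod.fst_sub, Prod.snd_sub]
    push_cast
    ring

/-- In every half-integral embedding of a Steiner tree whose terminals have integral
positions, the length of every root-terminal path is an integer. -/
theorem stmt_4 {V : Type*} [Fintype V] (G : SimpleGraph V) (hG : G.IsTree)
    (T : Set V) (r : V) (hr : r ∈ T) (π : V → ℝ × ℝ)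
    (hhalf : ∀ v : V, (∃ a : ℤ, 2 * (π v).1 = a) ∧ ∃ b : ℤ, 2 * (π v).2 = b)
    (hint : ∀ t ∈ T, (∃ a : ℤ, (π t).1 = a) ∧ ∃ b : ℤ, (π t).2 = b) :
    ∀ t ∈ T, ∃ m : ℤ, walkLen G π (hG.existsUnique_path r t).choose = m := by
  intro t ht
  obtain ⟨M, hM⟩ := walk_key G π hhalf ((hG.existsUnique_path r t).choose : G.Walk r t)
  obtain ⟨⟨ar, har⟩, ⟨br, hbr⟩⟩ := hint r hr
  obtain ⟨⟨at', hat⟩, ⟨bt, hbt⟩⟩ := hint t ht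
  refine ⟨ar - at' + (br - bt) + M, ?_⟩
  rw [hM, har, hbr, hat, hbt]
  push_cast
  ring
end
end

section
/- If a set of maximal x-components of an embedded Steiner tree contains no terminals, then the family {R(C)} of terminal sets whose root-paths pass through and return on the same side of each component C is a laminar family: for any two such components C₁, C₂, either R(C₁) ∩ R(C₂) = ∅, or one of R(C₁), R(C₂) contains the other. -/
open SimpleGraph Classical

noncomputable section

/-- An x-component of the embedding `π`: a nonempty connected set of vertices all having
the same x-coordinate. -/
def IsXComp {V : Type*} (G : SimpleGraph V) (π : V → ℝ × ℝ) (C : Set V) : Prop :=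
  C.Nonempty ∧ (G.induce C).Connected ∧ ∃ x0 : ℝ, ∀ v ∈ C, (π v).1 = x0

/-- A maximal x-component. -/
def IsMaxXComp {V : Type*} (G : SimpleGraph V) (π : V → ℝ × ℝ) (C : Set V) : Prop :=
  IsXComp G π C ∧ ∀ C', IsXComp G π C' → C ⊆ C' → C' = C

/-- Neighbors of the component `C` with strictly smaller x-coordinate. -/
def GammaLtX {V : Type*} (G : SimpleGraph V) (π : V → ℝ × ℝ) (C : Set V) : Set V :=
  {v | ∃ w ∈ C, G.Adj v w ∧ (π v).1 < (π w).1}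

/-- Neighbors of the component `C` with strictly larger x-coordinate. -/
def GammaGtX {V : Type*} (G : SimpleGraph V) (π : V → ℝ × ℝ) (C : Set V) : Set V :=
  {v | ∃ w ∈ C, G.Adj v w ∧ (π w).1 < (π v).1}

/-- `R(C)`: the terminals `t` whose root-`t` path meets `C` entering and leaving on the
same side. -/
def Rset {V : Type*} (G : SimpleGraph V) (hG : G.IsTree) (π : V → ℝ × ℝ)
    (r : V) (T : Set V) (C : Set V) : Set V :=
  {t ∈ T |
    (GammaGtX G π C ∩ {v | v ∈ (hG.existsUnique_path r t).choose.support}).ncard = 2 ∨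
    (GammaLtX G π C ∩ {v | v ∈ (hG.existsUnique_path r t).choose.support}).ncard = 2}

/-!
In a tree, a path meets at most two outer neighbours of a connected vertex set `C`, and if it
meets two, then it runs through `C` between them. Hence for `t ∈ R(C)` the root path to `t`
carries exactly two outer neighbours of `C`, and every root path through both of them carries
the same two, so it decides membership in `R(C)` the same way.

If `t ∈ R(C₁) ∩ R(C₂)`, the root path to `t` crosses one component, say `C₁`, before its first
vertex in `C₂`. That initial segment is shared by every root path that meets `C₂` (the entry
point of a connected set is unique in a tree), and it contains the two outer neighbours of
`C₁`; so `R(C₂) ⊆ R(C₁)`.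
-/

namespace SimpleGraph

variable {V : Type*} {G : SimpleGraph V}

def outerBoundary (G : SimpleGraph V) (C : Set V) : Set V :=
  {v | v ∉ C ∧ ∃ c ∈ C, G.Adj v c}

theorem IsAcyclic.eq_of_isPath (hG : G.IsAcyclic) {u v : V} {p q : G.Walk u v}
    (hp : p.IsPath) (hq : q.IsPath) : p = q :=
  congrArg Subtype.val ((hG.subsingleton_path u v).elim ⟨p, hp⟩ ⟨q, hq⟩)

theorem Walk.IsPath.append {u v w : V} {p : G.Walk u v} {q : G.Walk v w} (hp : p.IsPath)
    (hq : q.IsPath) (h : ∀ x ∈ p.support, x ∈ q.support → x = v) : (p.append q).IsPath := by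
  have hq' := hq.support_nodup
  rw [← q.cons_tail_support, List.nodup_cons] at hq'
  rw [Walk.isPath_def, Walk.support_append, List.nodup_append]
  refine ⟨hp.support_nodup, hq'.2, fun x hxp x' hxq hxx' => ?_⟩
  subst hxx'
  exact hq'.1 (h x hxp (List.mem_of_mem_tail hxq) ▸ hxq)

theorem Walk.mem_support_takeUntil_or {u v x y : V} (p : G.Walk u v) (hx : x ∈ p.support)
    (hy : y ∈ p.support) :
    x ∈ (p.takeUntil y hy).support ∨ y ∈ (p.takeUntil x hx).support := by
  simp only [takeUntil_eq_take, support_copy, support_take, List.mem_take_iff_idxOf_lt hx,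
    List.mem_take_iff_idxOf_lt hy]
  omega

theorem Walk.exists_first_mem {u v : V} (p : G.Walk u v) {C : Set V}
    (h : ∃ c ∈ C, c ∈ p.support) :
    ∃ a ∈ C, ∃ ha : a ∈ p.support, ∀ w ∈ (p.takeUntil a ha).support, w ∈ C → w = a := by
  have hex : ∃ n, ∃ c ∈ C, c ∈ p.support ∧ p.support.idxOf c = n :=
    let ⟨c, hc, hcp⟩ := h; ⟨_, c, hc, hcp, rfl⟩
  obtain ⟨a, ha, hap, hidx⟩ := Nat.find_spec hex
  refine ⟨a, ha, hap, fun w hw hwC => ?_⟩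
  have hwp := p.support_takeUntil_subset_support hap hw
  rw [takeUntil_eq_take, support_copy, support_take, List.mem_take_iff_idxOf_lt hwp] at hw
  have hmin := Nat.find_min' hex ⟨w, hwC, hwp, rfl⟩
  exact (List.idxOf_inj hwp).mp (by omega)

theorem Walk.IsPath.exists_subpath_through {u v x y z : V} {p : G.Walk u v} (hp : p.IsPath)
    {hy : y ∈ p.support} {hz : z ∈ p.support} (hxy : x ∈ (p.takeUntil y hy).support)
    (hyz : y ∈ (p.takeUntil z hz).support) :
    ∃ s : G.Walk x z, s.IsPath ∧ y ∈ s.support ∧ s.support ⊆ p.support := by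
  set q := p.takeUntil z hz
  have hxq : x ∈ q.support := by
    rw [← q.take_spec hyz, Walk.takeUntil_takeUntil]
    exact Walk.support_subset_support_append_left _ _ hxy
  refine ⟨q.dropUntil x hxq, (hp.takeUntil hz).dropUntil hxq, ?_,
    fun w hw => p.support_takeUntil_subset_support hz (q.support_dropUntil_subset_support hxq hw)⟩
  rcases eq_or_ne x y with rfl | hne
  · exact Walk.start_mem_support _
  have hyq : y ∈ (q.takeUntil x hxq).support ∨ y ∈ (q.dropUntil x hxq).support := by
    rw [← Walk.mem_support_append_iff, q.take_spec]
    exact hyz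
  refine hyq.resolve_left ?_
  rw [Walk.takeUntil_takeUntil]
  exact Walk.notMem_support_takeUntil_support_takeUntil_subset hne hy hxy

theorem Walk.IsPath.exists_subpath {u v x y : V} {p : G.Walk u v} (hp : p.IsPath)
    (hx : x ∈ p.support) (hy : y ∈ p.support) :
    ∃ s : G.Walk x y, s.IsPath ∧ s.support ⊆ p.support := by
  rcases p.mem_support_takeUntil_or hx hy with h | h
  · obtain ⟨s, hs, -, hsp⟩ := hp.exists_subpath_through (hy := hx) (Walk.end_mem_support _) h
    exact ⟨s, hs, hsp⟩
  · obtain ⟨s, hs, -, hsp⟩ := hp.exists_subpath_through (hy := hy) (Walk.end_mem_support _) h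
    exact ⟨s.reverse, hs.reverse, by simpa using hsp⟩

theorem exists_isPath_forall_mem_of_connected_induce {C : Set V}
    (hC : (G.induce C).Connected) {a b : V} (ha : a ∈ C) (hb : b ∈ C) :
    ∃ p : G.Walk a b, p.IsPath ∧ ∀ w ∈ p.support, w ∈ C := by
  obtain ⟨w⟩ := hC.preconnected ⟨a, ha⟩ ⟨b, hb⟩
  refine ⟨(w.map (Embedding.induce C).toHom).bypass, Walk.bypass_isPath _, fun x hx => ?_⟩
  obtain ⟨y, -, rfl⟩ := List.mem_map.mp
    (Walk.support_map _ w ▸ Walk.support_bypass_subset_support _ hx)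
  exact y.2

theorem Walk.IsPath.exists_mem_outerBoundary_pair {C : Set V} {u v c : V} {p : G.Walk u v}
    (hp : p.IsPath) (hu : u ∉ C) (hv : v ∉ C) (hc : c ∈ C) (hcp : c ∈ p.support) :
    ∃ x y, x ≠ y ∧ x ∈ G.outerBoundary C ∧ y ∈ G.outerBoundary C ∧
      x ∈ p.support ∧ y ∈ p.support := by
  obtain ⟨d, hd, hdC, hdC'⟩ := (p.dropUntil c hcp).exists_boundary_dart C hc hv
  obtain ⟨d', hd', hd'C, hd'C'⟩ := (p.takeUntil c hcp).reverse.exists_boundary_dart C hc hu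
  have hx := Walk.dart_snd_mem_support_of_mem_darts _ hd'
  have hy := Walk.dart_snd_mem_support_of_mem_darts _ hd
  rw [Walk.support_reverse, List.mem_reverse] at hx
  refine ⟨d'.snd, d.snd, ?_, ⟨hd'C', _, hd'C, d'.adj.symm⟩, ⟨hdC', _, hdC, d.adj.symm⟩,
    p.support_takeUntil_subset_support hcp hx, p.support_dropUntil_subset_support hcp hy⟩
  exact Walk.IsPath.ne_of_mem_support_of_append ((p.take_spec hcp).symm ▸ hp)
    (fun h => hdC' (h ▸ hc)) hx hy

theorem IsAcyclic.support_of_isPath_of_mem_outerBoundary (hG : G.IsAcyclic) {C : Set V}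
    (hC : (G.induce C).Connected) {x y : V} (hx : x ∈ G.outerBoundary C)
    (hy : y ∈ G.outerBoundary C) (hxy : x ≠ y) {s : G.Walk x y} (hs : s.IsPath) :
    (∀ w ∈ s.support, w = x ∨ w = y ∨ w ∈ C) ∧ ∃ c ∈ C, c ∈ s.support := by
  obtain ⟨hxC, cx, hcx, hxcx⟩ := hx
  obtain ⟨hyC, cy, hcy, hycy⟩ := hy
  obtain ⟨q, hq, hqC⟩ := exists_isPath_forall_mem_of_connected_induce hC hcx hcy
  have hpath : (Walk.cons hxcx (q.concat hycy.symm)).IsPath := by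
    refine (hq.concat (fun h => hyC (hqC _ h)) _).cons ?_
    rw [Walk.support_concat, List.mem_append, List.mem_singleton]
    exact fun h => h.elim (fun h => hxC (hqC _ h)) hxy
  rw [hG.eq_of_isPath hs hpath]
  refine ⟨fun w hw => ?_, cx, hcx, by simp⟩
  simp only [Walk.support_cons, Walk.support_concat, List.mem_cons, List.mem_append,
    List.mem_nil_iff, or_false] at hw
  rcases hw with h | h | h
  exacts [Or.inl h, Or.inr (Or.inr (hqC w h)), Or.inr (Or.inl h)]

theorem IsAcyclic.eq_or_eq_of_mem_outerBoundary (hG : G.IsAcyclic) {C : Set V}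
    (hC : (G.induce C).Connected) {u v x y z : V} {p : G.Walk u v} (hp : p.IsPath)
    (hx : x ∈ G.outerBoundary C) (hy : y ∈ G.outerBoundary C) (hz : z ∈ G.outerBoundary C)
    (hxy : x ≠ y) (hxp : x ∈ p.support) (hyp : y ∈ p.support) (hzp : z ∈ p.support) :
    z = x ∨ z = y := by
  wlog hxy' : x ∈ (p.takeUntil y hyp).support generalizing x y
  · exact (this hy hx hxy.symm hyp hxp
      ((p.mem_support_takeUntil_or hxp hyp).resolve_left hxy')).symm
  have between {a b c : V} (ha : a ∈ G.outerBoundary C) (hc : c ∈ G.outerBoundary C)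
      (hb : b ∈ G.outerBoundary C) (hac : a ≠ c) (hbp : b ∈ p.support) (hcp : c ∈ p.support)
      (hab : a ∈ (p.takeUntil b hbp).support) (hbc : b ∈ (p.takeUntil c hcp).support) :
      b = a ∨ b = c := by
    obtain ⟨s, hs, hbs, -⟩ := hp.exists_subpath_through hab hbc
    exact ((hG.support_of_isPath_of_mem_outerBoundary hC ha hc hac hs).1 b hbs).imp_right
      (Or.resolve_right · hb.1)
  rcases p.mem_support_takeUntil_or hyp hzp with hyz | hzy
  · rcases eq_or_ne z x with rfl | hzx
    · exact Or.inl rfl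
    exact Or.inr ((between hx hz hy hzx.symm hyp hzp hxy' hyz).resolve_left hxy.symm).symm
  rcases p.mem_support_takeUntil_or hxp hzp with hxz | hzx
  · exact between hx hy hz hxy hzp hyp hxz hzy
  · rcases eq_or_ne z y with rfl | hzy'
    · exact Or.inr rfl
    exact Or.inl ((between hz hy hx hzy' hxp hyp hzx hxy').resolve_right hxy).symm

theorem IsAcyclic.exists_mem_support_of_mem_outerBoundary (hG : G.IsAcyclic) {C : Set V}
    (hC : (G.induce C).Connected) {u v x y : V} {p : G.Walk u v} (hp : p.IsPath)
    (hx : x ∈ G.outerBoundary C) (hy : y ∈ G.outerBoundary C) (hxy : x ≠ y)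
    (hxp : x ∈ p.support) (hyp : y ∈ p.support) : ∃ c ∈ C, c ∈ p.support := by
  obtain ⟨s, hs, hsp⟩ := hp.exists_subpath hxp hyp
  obtain ⟨-, c, hc, hcs⟩ := hG.support_of_isPath_of_mem_outerBoundary hC hx hy hxy hs
  exact ⟨c, hc, hsp hcs⟩

theorem IsAcyclic.outerBoundary_inter_support_subset (hG : G.IsAcyclic) {C : Set V}
    (hC : (G.induce C).Connected) {u v u' v' x y : V} {p : G.Walk u v} (hp : p.IsPath)
    {q : G.Walk u' v'} (hx : x ∈ G.outerBoundary C) (hy : y ∈ G.outerBoundary C) (hxy : x ≠ y)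
    (hxp : x ∈ p.support) (hyp : y ∈ p.support) (hxq : x ∈ q.support) (hyq : y ∈ q.support) :
    G.outerBoundary C ∩ {w | w ∈ p.support} ⊆ G.outerBoundary C ∩ {w | w ∈ q.support} := by
  rintro w ⟨hw, hwp⟩
  rcases hG.eq_or_eq_of_mem_outerBoundary hC hp hx hy hw hxy hxp hyp hwp with rfl | rfl
  exacts [⟨hw, hxq⟩, ⟨hw, hyq⟩]

theorem IsAcyclic.support_entryPath_subset (hG : G.IsAcyclic) {C : Set V}
    (hC : (G.induce C).Connected) {r a c : V} {q : G.Walk r a} (hq : q.IsPath) (ha : a ∈ C)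
    (hfirst : ∀ w ∈ q.support, w ∈ C → w = a) (hc : c ∈ C) {p : G.Walk r c}
    (hp : p.IsPath) : q.support ⊆ p.support := by
  obtain ⟨s, hs, hsC⟩ := exists_isPath_forall_mem_of_connected_induce hC ha hc
  rw [hG.eq_of_isPath hp (hq.append hs fun w hwq hws => hfirst w hwq (hsC w hws))]
  exact Walk.support_subset_support_append_left _ _

end SimpleGraph

section XComponents

variable {V : Type*} {G : SimpleGraph V} {π : V → ℝ × ℝ}

theorem IsMaxXComp.disjoint {C₁ C₂ : Set V} (h₁ : IsMaxXComp G π C₁) (h₂ : IsMaxXComp G π C₂)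
    (hne : C₁ ≠ C₂) : Disjoint C₁ C₂ := by
  rw [Set.disjoint_iff_inter_eq_empty, ← Set.not_nonempty_iff_eq_empty]
  rintro ⟨v, hv₁, hv₂⟩
  obtain ⟨⟨-, hconn₁, x₁, hx₁⟩, hmax₁⟩ := h₁
  obtain ⟨⟨-, hconn₂, x₂, hx₂⟩, hmax₂⟩ := h₂
  have hunion : IsXComp G π (C₁ ∪ C₂) := by
    refine ⟨⟨v, Or.inl hv₁⟩,
      induce_union_connected hconn₁.preconnected hconn₂.preconnected ⟨v, hv₁, hv₂⟩, x₁, ?_⟩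
    rintro w (hw | hw)
    · exact hx₁ w hw
    · rw [hx₂ w hw, ← hx₂ v hv₂, hx₁ v hv₁]
  exact hne ((hmax₁ _ hunion Set.subset_union_left).symm.trans
    (hmax₂ _ hunion Set.subset_union_right))

variable {C : Set V}

theorem gammaLtX_subset_outerBoundary (hC : ∃ x0 : ℝ, ∀ v ∈ C, (π v).1 = x0) :
    GammaLtX G π C ⊆ G.outerBoundary C := by
  obtain ⟨x0, hx0⟩ := hC
  rintro v ⟨w, hw, hvw, hlt⟩
  exact ⟨fun hv => hlt.ne (by rw [hx0 v hv, hx0 w hw]), w, hw, hvw⟩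

theorem gammaGtX_subset_outerBoundary (hC : ∃ x0 : ℝ, ∀ v ∈ C, (π v).1 = x0) :
    GammaGtX G π C ⊆ G.outerBoundary C := by
  obtain ⟨x0, hx0⟩ := hC
  rintro v ⟨w, hw, hvw, hlt⟩
  exact ⟨fun hv => hlt.ne' (by rw [hx0 v hv, hx0 w hw]), w, hw, hvw⟩

variable {hG : G.IsTree} {r : V} {T : Set V}

theorem exists_outerBoundary_pair_of_mem_Rset (hC : ∃ x0 : ℝ, ∀ v ∈ C, (π v).1 = x0) {t : V}
    (ht : t ∈ Rset G hG π r T C) :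
    ∃ x y, x ≠ y ∧ x ∈ G.outerBoundary C ∧ y ∈ G.outerBoundary C ∧
      x ∈ (hG.existsUnique_path r t).choose.support ∧
      y ∈ (hG.existsUnique_path r t).choose.support := by
  have pair {Γ : Set V} (hΓ : Γ ⊆ G.outerBoundary C)
      (h : (Γ ∩ {v | v ∈ (hG.existsUnique_path r t).choose.support}).ncard = 2) :
      ∃ x y, x ≠ y ∧ x ∈ G.outerBoundary C ∧ y ∈ G.outerBoundary C ∧
        x ∈ (hG.existsUnique_path r t).choose.support ∧
        y ∈ (hG.existsUnique_path r t).choose.support := by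
    obtain ⟨x, y, hxy, hset⟩ := Set.ncard_eq_two.mp h
    have hx : x ∈ Γ ∩ {v | v ∈ (hG.existsUnique_path r t).choose.support} :=
      hset ▸ Set.mem_insert x {y}
    have hy : y ∈ Γ ∩ {v | v ∈ (hG.existsUnique_path r t).choose.support} :=
      hset ▸ Set.mem_insert_of_mem x rfl
    exact ⟨x, y, hxy, hΓ hx.1, hΓ hy.1, hx.2, hy.2⟩
  rcases ht.2 with h | h
  exacts [pair (gammaGtX_subset_outerBoundary hC) h, pair (gammaLtX_subset_outerBoundary hC) h]

theorem exists_mem_support_of_mem_Rset (hC : IsXComp G π C) {t : V}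
    (ht : t ∈ Rset G hG π r T C) : ∃ c ∈ C, c ∈ (hG.existsUnique_path r t).choose.support := by
  obtain ⟨x, y, hxy, hx, hy, hxP, hyP⟩ := exists_outerBoundary_pair_of_mem_Rset hC.2.2 ht
  exact hG.isAcyclic.exists_mem_support_of_mem_outerBoundary hC.2.1
    (hG.existsUnique_path r t).choose_spec.1 hx hy hxy hxP hyP

theorem mem_Rset_of_outerBoundary_inter_eq (hC : ∃ x0 : ℝ, ∀ v ∈ C, (π v).1 = x0) {t t' : V}
    (ht : t ∈ Rset G hG π r T C) (ht' : t' ∈ T)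
    (h : G.outerBoundary C ∩ {v | v ∈ (hG.existsUnique_path r t).choose.support} =
      G.outerBoundary C ∩ {v | v ∈ (hG.existsUnique_path r t').choose.support}) :
    t' ∈ Rset G hG π r T C := by
  have key {Γ : Set V} (hΓ : Γ ⊆ G.outerBoundary C) :
      Γ ∩ {v | v ∈ (hG.existsUnique_path r t).choose.support} =
        Γ ∩ {v | v ∈ (hG.existsUnique_path r t').choose.support} := by
    rw [← Set.inter_eq_left.mpr hΓ, Set.inter_assoc, h, ← Set.inter_assoc]
  refine ⟨ht', ?_⟩
  rw [← key (gammaGtX_subset_outerBoundary hC), ← key (gammaLtX_subset_outerBoundary hC)]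
  exact ht.2

theorem Rset_subset_Rset_of_entryPath_meets {C' : Set V} (hC : IsXComp G π C)
    (hC' : IsXComp G π C') (hrC : r ∉ C) (hdisj : Disjoint C C') {t : V}
    (ht : t ∈ Rset G hG π r T C) {a : V} (ha : a ∈ C') {q : G.Walk r a} (hq : q.IsPath)
    (hfirst : ∀ w ∈ q.support, w ∈ C' → w = a) (hqC : ∃ c ∈ C, c ∈ q.support)
    (hqP : q.support ⊆ (hG.existsUnique_path r t).choose.support) :
    Rset G hG π r T C' ⊆ Rset G hG π r T C := by
  obtain ⟨c, hc, hcq⟩ := hqC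
  obtain ⟨x, y, hxy, hx, hy, hxq, hyq⟩ :=
    hq.exists_mem_outerBoundary_pair hrC (Set.disjoint_right.mp hdisj ha) hc hcq
  intro t' ht'
  have hP := (hG.existsUnique_path r t).choose_spec.1
  have hP' := (hG.existsUnique_path r t').choose_spec.1
  obtain ⟨c', hc', hc'P'⟩ := exists_mem_support_of_mem_Rset hC' ht'
  have hqP' : q.support ⊆ (hG.existsUnique_path r t').choose.support := fun w hw =>
    Walk.support_takeUntil_subset_support _ hc'P' <|
      hG.isAcyclic.support_entryPath_subset hC'.2.1 hq ha hfirst hc'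
        (hP'.takeUntil hc'P') hw
  refine mem_Rset_of_outerBoundary_inter_eq hC.2.2 ht ht'.1 (Set.Subset.antisymm ?_ ?_)
  · exact hG.isAcyclic.outerBoundary_inter_support_subset hC.2.1 hP hx hy hxy
      (hqP hxq) (hqP hyq) (hqP' hxq) (hqP' hyq)
  · exact hG.isAcyclic.outerBoundary_inter_support_subset hC.2.1 hP' hx hy hxy
      (hqP' hxq) (hqP' hyq) (hqP hxq) (hqP hyq)

end XComponents

theorem stmt_15_general {V : Type*} (G : SimpleGraph V) (hG : G.IsTree)
    (T : Set V) (r : V) (hr : r ∈ T) (π : V → ℝ × ℝ)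
    (Δ : Set (Set V)) (hΔ : ∀ C ∈ Δ, IsMaxXComp G π C ∧ C ∩ T = ∅) :
    ∀ C₁ ∈ Δ, ∀ C₂ ∈ Δ,
      Rset G hG π r T C₁ ⊆ Rset G hG π r T C₂ ∨
      Rset G hG π r T C₂ ⊆ Rset G hG π r T C₁ ∨
      Rset G hG π r T C₁ ∩ Rset G hG π r T C₂ = ∅ := by
  intro C₁ hC₁ C₂ hC₂
  obtain ⟨hmax₁, hT₁⟩ := hΔ C₁ hC₁
  obtain ⟨hmax₂, hT₂⟩ := hΔ C₂ hC₂
  rcases eq_or_ne C₁ C₂ with rfl | hne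
  · exact Or.inl subset_rfl
  have hr₁ : r ∉ C₁ := fun h => (hT₁ ▸ ⟨h, hr⟩ : r ∈ (∅ : Set V))
  have hr₂ : r ∉ C₂ := fun h => (hT₂ ▸ ⟨h, hr⟩ : r ∈ (∅ : Set V))
  rcases (Rset G hG π r T C₁ ∩ Rset G hG π r T C₂).eq_empty_or_nonempty with hE | ⟨t, ht₁, ht₂⟩
  · exact Or.inr (Or.inr hE)
  set P := (hG.existsUnique_path r t).choose
  have hP : P.IsPath := (hG.existsUnique_path r t).choose_spec.1
  obtain ⟨a₁, ha₁, ha₁P, hfirst₁⟩ :=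
    P.exists_first_mem (exists_mem_support_of_mem_Rset hmax₁.1 ht₁)
  obtain ⟨a₂, ha₂, ha₂P, hfirst₂⟩ :=
    P.exists_first_mem (exists_mem_support_of_mem_Rset hmax₂.1 ht₂)
  have hdisj := hmax₁.disjoint hmax₂ hne
  rcases P.mem_support_takeUntil_or ha₁P ha₂P with h | h
  · exact Or.inr (Or.inl (Rset_subset_Rset_of_entryPath_meets hmax₁.1 hmax₂.1 hr₁ hdisj ht₁
      ha₂ (hP.takeUntil ha₂P) hfirst₂ ⟨a₁, ha₁, h⟩ (P.support_takeUntil_subset_support ha₂P)))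
  · exact Or.inl (Rset_subset_Rset_of_entryPath_meets hmax₂.1 hmax₁.1 hr₂ hdisj.symm ht₂
      ha₁ (hP.takeUntil ha₁P) hfirst₁ ⟨a₂, ha₂, h⟩ (P.support_takeUntil_subset_support ha₁P))

/-- Lemma 2: for maximal x-components containing no terminals, the family `{R(C)}` is
laminar. -/
theorem stmt_15 {V : Type*} [Fintype V] (G : SimpleGraph V) (hG : G.IsTree)
    (T : Set V) (r : V) (hr : r ∈ T) (π : V → ℝ × ℝ)
    (Δ : Set (Set V)) (hΔ : ∀ C ∈ Δ, IsMaxXComp G π C ∧ C ∩ T = ∅) :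
    ∀ C₁ ∈ Δ, ∀ C₂ ∈ Δ,
      Rset G hG π r T C₁ ⊆ Rset G hG π r T C₂ ∨
      Rset G hG π r T C₂ ⊆ Rset G hG π r T C₁ ∨
      Rset G hG π r T C₁ ∩ Rset G hG π r T C₂ = ∅ :=
  stmt_15_general G hG T r hr π Δ hΔ
end
end
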